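/- Let d ≥ 1, s ∈ (0,1), 1 ≤ i, j ≤ d, and let Ω ⊆ ℝ^d be a measurable set. There exists C > 0 depending only on d and s such that for all ε ∈ (0,1] and every measurable f : Ω × ℝ^d → ℝ with ∫_Ω ∫_{ℝ^d} f(x,v)² M₁(v)^{-1} dv dx < ∞, one has ∫_Ω (∫_{ℝ^d} v_i v_j f(x,v) (1+ε²|v|²)^{-1} dv)² dx ≤ C ε^{2s−4} ∫_Ω ∫_{ℝ^d} f(x,v)² M₁(v)^{-1} dv dx. -/

import Mathlib

open MeasureTheory Real Metric
open scoped ENNReal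

/-- The heavy-tailed equilibrium `M₁(v) = c ⟨v⟩^{-(d+2s)}` with normalizing constant `c`. -/
noncomputable def M1 (d : ℕ) (s c : ℝ) (v : EuclideanSpace ℝ (Fin d)) : ℝ :=
  c * (1 + ‖v‖ ^ 2) ^ (-((d : ℝ) + 2 * s) / 2)

lemma coord_sq_le_norm_sq {d : ℕ} (v : EuclideanSpace ℝ (Fin d)) (i : Fin d) :
    (v i) ^ 2 ≤ ‖v‖ ^ 2 := by
  have h := EuclideanSpace.norm_eq v
  rw [h, Real.sq_sqrt (by positivity)]
  calc (v i)^2 = ‖v i‖^2 := by rw [Real.norm_eq_abs, sq_abs]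
    _ ≤ ∑ k : Fin d, ‖v k‖^2 :=
      Finset.single_le_sum (f := fun k => ‖v k‖^2) (fun k _ => by positivity)
        (Finset.mem_univ i)

lemma aux_lt_top (d : ℕ) (hd : 1 ≤ d) {a : ℝ} (ha : -(d:ℝ) < a) (ha' : a < 4 - d) :
    ∫⁻ w : EuclideanSpace ℝ (Fin d),
      ENNReal.ofReal (‖w‖ ^ a * ((1 + ‖w‖ ^ 2) ^ 2)⁻¹) < ⊤ := by
  haveI : Nonempty (Fin d) := Fin.pos_iff_nonempty.mp hd
  haveI : Nontrivial (EuclideanSpace ℝ (Fin d)) :=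
    inferInstance
  set E := EuclideanSpace ℝ (Fin d)
  have hdfin : Module.finrank ℝ E = d := finrank_euclideanSpace_fin
  have hfin : (Module.finrank ℝ E : ℝ) = d := by rw [hdfin]
  set g : E → ℝ≥0∞ := fun w => ENNReal.ofReal (‖w‖ ^ a * ((1 + ‖w‖ ^ 2) ^ 2)⁻¹) with hg
  rw [← lintegral_add_compl g (measurableSet_ball (x := (0:E)) (ε := 1))]
  have htailpt : ∀ w : E, w ∉ ball (0:E) 1 → g w ≤ ENNReal.ofReal (2 ^ (4 - a) * (1 + ‖w‖) ^ (a - 4)) := by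
    intro w hw
    have hw1 : 1 ≤ ‖w‖ := by simpa [dist_eq_norm] using hw
    have hw0 : 0 < ‖w‖ := lt_of_lt_of_le one_pos hw1
    apply ENNReal.ofReal_le_ofReal
    have h1 : ((1 + ‖w‖ ^ 2) ^ 2)⁻¹ ≤ (‖w‖ ^ (4:ℝ))⁻¹ := by
      apply inv_anti₀ (by positivity)
      rw [show (4:ℝ) = ((4:ℕ):ℝ) by norm_num, Real.rpow_natCast]
      calc ‖w‖ ^ (4:ℕ) = (‖w‖ ^ 2) ^ 2 := by ring
        _ ≤ (1 + ‖w‖ ^ 2) ^ 2 := by nlinarith [sq_nonneg ‖w‖, sq_nonneg (‖w‖^2)]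
    calc ‖w‖ ^ a * ((1 + ‖w‖ ^ 2) ^ 2)⁻¹ ≤ ‖w‖ ^ a * (‖w‖ ^ (4:ℝ))⁻¹ := by
          apply mul_le_mul_of_nonneg_left h1 (by positivity)
      _ = ‖w‖ ^ (a - 4) := by
          rw [← Real.rpow_neg hw0.le, ← Real.rpow_add hw0]; ring_nf
      _ ≤ ((1 + ‖w‖) / 2) ^ (a - 4) := by
          apply Real.rpow_le_rpow_of_nonpos (by positivity) (by linarith) (by linarith)
      _ = 2 ^ (4 - a) * (1 + ‖w‖) ^ (a - 4) := by
          rw [Real.div_rpow (by positivity) (by norm_num),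
            show (4 - a) = -(a-4) by ring, Real.rpow_neg (by norm_num)]
          field_simp
  have htail : ∫⁻ w in (ball (0:E) 1)ᶜ, g w < ⊤ := by
    calc ∫⁻ w in (ball (0:E) 1)ᶜ, g w
        ≤ ∫⁻ w in (ball (0:E) 1)ᶜ, ENNReal.ofReal (2 ^ (4 - a) * (1 + ‖w‖) ^ (a - 4)) := by
          apply setLIntegral_mono _ htailpt
          · apply Measurable.ennreal_ofReal; fun_prop
      _ ≤ ∫⁻ w : E, ENNReal.ofReal (2 ^ (4 - a) * (1 + ‖w‖) ^ (a - 4)) :=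
          setLIntegral_le_lintegral _ _
      _ = ENNReal.ofReal (2 ^ (4-a)) * ∫⁻ w : E, ENNReal.ofReal ((1 + ‖w‖) ^ (-(4 - a))) := by
          rw [← lintegral_const_mul' _ _ ENNReal.ofReal_ne_top]
          congr 1 with w
          rw [← ENNReal.ofReal_mul (by positivity)]
          congr 1
          ring_nf
      _ < ⊤ := by
          apply ENNReal.mul_lt_top ENNReal.ofReal_lt_top
          exact finite_integral_one_add_norm (by rw [hfin]; linarith)
  have h2 : (0:ℝ) < 1/2 := by norm_num
  have hball : ∫⁻ w in ball (0:E) 1, g w < ⊤ := by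
    set a' : ℝ := min a 0 with ha'def
    have ha'0 : a' ≤ 0 := min_le_right _ _
    have ha'd : (0:ℝ) < a' + d := by
      have : -(d:ℝ) < a' := lt_min ha (neg_lt_zero.mpr (by exact_mod_cast hd))
      linarith
    -- pointwise bound on the ball
    have hb : ∀ w ∈ ball (0:E) 1, g w ≤ ENNReal.ofReal (‖w‖ ^ a') := by
      intro w hw
      have hw1 : ‖w‖ < 1 := by simpa [dist_eq_norm] using hw
      apply ENNReal.ofReal_le_ofReal
      rcases eq_or_lt_of_le (norm_nonneg w) with h0 | h0
      · rw [← h0]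
        rcases lt_trichotomy a 0 with hlt | heq | hgt
        · rw [show a' = a by simp [ha'def, min_eq_left hlt.le]]
          have : (0:ℝ) ^ a = 0 := Real.zero_rpow (by linarith)
          simp [this]
        · rw [heq, show a' = (0:ℝ) by simp [ha'def, heq]]
          simp
        · have h1 : (0:ℝ) ^ a = 0 := Real.zero_rpow (by linarith)
          have h2' : (0:ℝ) ^ a' = (0:ℝ)^(min a 0) := rfl
          rw [h1]
          simp only [zero_mul]
          positivity
      · calc ‖w‖ ^ a * ((1 + ‖w‖ ^ 2) ^ 2)⁻¹ ≤ ‖w‖ ^ a * 1 := by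
              apply mul_le_mul_of_nonneg_left _ (by positivity)
              rw [inv_le_one_iff₀]; right; nlinarith [sq_nonneg ‖w‖]
          _ = ‖w‖ ^ a := mul_one _
          _ ≤ ‖w‖ ^ a' := Real.rpow_le_rpow_of_exponent_ge h0 hw1.le (min_le_left _ _)
    -- annuli
    set A : ℕ → Set E := fun k => closedBall (0:E) ((1/2:ℝ)^k) \ closedBall (0:E) ((1/2:ℝ)^(k+1)) with hA
    have hcover : ball (0:E) 1 ⊆ {0} ∪ ⋃ k : ℕ, A k := by
      intro w hw
      have hw1 : ‖w‖ < 1 := by simpa [dist_eq_norm] using hw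
      rcases eq_or_lt_of_le (norm_nonneg w) with h0 | h0
      · left; simp [← norm_eq_zero, ← h0]
      · right
        classical
        have hex : ∃ n : ℕ, (1/2:ℝ)^n < ‖w‖ := exists_pow_lt_of_lt_one h0 (by norm_num)
        have hspec : (1/2:ℝ)^(Nat.find hex) < ‖w‖ := Nat.find_spec hex
        have hn1 : Nat.find hex ≠ 0 := by
          intro h
          rw [h] at hspec; simp at hspec; linarith
        obtain ⟨k, hk⟩ := Nat.exists_eq_succ_of_ne_zero hn1
        rw [hk] at hspec
        have hmin : ¬ ((1/2:ℝ)^k < ‖w‖) := Nat.find_min hex (by omega)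
        refine Set.mem_iUnion.mpr ⟨k, ?_, ?_⟩
        · simpa [mem_closedBall, dist_eq_norm] using not_lt.mp hmin
        · simpa [mem_closedBall, dist_eq_norm] using hspec
    set V : ℝ≥0∞ := volume (ball (0:E) 1) with hV
    have hVlt : V < ⊤ := measure_ball_lt_top
    set q : ℝ := (1/2:ℝ) ^ (a' + d) with hq
    have hq1 : q < 1 := Real.rpow_lt_one (by norm_num) (by norm_num) ha'd
    have hq0 : 0 ≤ q := Real.rpow_nonneg (by norm_num) _
    have hkey : ∀ k : ℕ, ((1/2:ℝ)^(k+1)) ^ a' * ((1/2:ℝ)^k) ^ (d:ℕ) = (1/2:ℝ) ^ a' * q ^ k := by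
      intro k
      have e1 : ((1/2:ℝ)^(k+1)) ^ a' = (1/2:ℝ) ^ (((k:ℝ)+1) * a') := by
        rw [← Real.rpow_natCast (1/2:ℝ) (k+1), ← Real.rpow_mul h2.le]
        push_cast; ring_nf
      have e2 : ((1/2:ℝ)^k) ^ (d:ℕ) = (1/2:ℝ) ^ ((k:ℝ) * d) := by
        rw [← pow_mul, ← Real.rpow_natCast (1/2:ℝ) (k*d)]
        push_cast; ring_nf
      have e3 : q ^ k = (1/2:ℝ) ^ ((a'+d) * k) := by
        rw [hq, ← Real.rpow_natCast ((1/2:ℝ) ^ (a'+(d:ℝ))) k, ← Real.rpow_mul h2.le]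
      rw [e1, e2, e3, ← Real.rpow_add h2, ← Real.rpow_add h2]
      congr 1; ring
    have hterm : ∀ k : ℕ, ∫⁻ w in A k, ENNReal.ofReal (‖w‖ ^ a')
        ≤ ENNReal.ofReal ((1/2:ℝ) ^ a') * ENNReal.ofReal q ^ k * V := by
      intro k
      have hb2 : ∀ w ∈ A k, ENNReal.ofReal (‖w‖ ^ a') ≤ ENNReal.ofReal (((1/2:ℝ)^(k+1)) ^ a') := by
        intro w hw
        apply ENNReal.ofReal_le_ofReal
        apply Real.rpow_le_rpow_of_nonpos (by positivity) _ ha'0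
        have := hw.2
        simp only [mem_closedBall, dist_eq_norm, not_le, sub_zero] at this
        simpa [dist_zero_right] using this.le
      calc ∫⁻ w in A k, ENNReal.ofReal (‖w‖ ^ a')
          ≤ ∫⁻ _ in A k, ENNReal.ofReal (((1/2:ℝ)^(k+1)) ^ a') := setLIntegral_mono measurable_const hb2
        _ = ENNReal.ofReal (((1/2:ℝ)^(k+1)) ^ a') * volume (A k) := setLIntegral_const _ _
        _ ≤ ENNReal.ofReal (((1/2:ℝ)^(k+1)) ^ a') * volume (closedBall (0:E) ((1/2:ℝ)^k)) := by
            apply mul_le_mul_right (measure_mono Set.diff_subset)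
        _ = ENNReal.ofReal (((1/2:ℝ)^(k+1)) ^ a') * (ENNReal.ofReal (((1/2:ℝ)^k) ^ (d:ℕ)) * V) := by
            rw [Measure.addHaar_closedBall _ _ (by positivity), hdfin]
        _ = ENNReal.ofReal ((1/2:ℝ) ^ a') * ENNReal.ofReal q ^ k * V := by
            rw [← mul_assoc, ← ENNReal.ofReal_mul (by positivity), hkey k,
              ENNReal.ofReal_mul (by positivity), ENNReal.ofReal_pow hq0]
    calc ∫⁻ w in ball (0:E) 1, g w
        ≤ ∫⁻ w in ball (0:E) 1, ENNReal.ofReal (‖w‖ ^ a') := setLIntegral_mono (by fun_prop) hb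
      _ ≤ ∫⁻ w in ({0} ∪ ⋃ k : ℕ, A k : Set E), ENNReal.ofReal (‖w‖ ^ a') :=
          lintegral_mono_set hcover
      _ ≤ (∫⁻ w in ({0} : Set E), ENNReal.ofReal (‖w‖ ^ a'))
          + ∫⁻ w in (⋃ k : ℕ, A k), ENNReal.ofReal (‖w‖ ^ a') := lintegral_union_le _ _ _
      _ ≤ 0 + ∑' k : ℕ, ∫⁻ w in A k, ENNReal.ofReal (‖w‖ ^ a') := by
          gcongr
          · exact le_of_eq (setLIntegral_measure_zero _ _ (measure_singleton _))
          · exact lintegral_iUnion_le _ _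
      _ ≤ 0 + ∑' k : ℕ, ENNReal.ofReal ((1/2:ℝ) ^ a') * ENNReal.ofReal q ^ k * V := by
          gcongr with k
          exact hterm k
      _ = ENNReal.ofReal ((1/2:ℝ) ^ a') * (1 - ENNReal.ofReal q)⁻¹ * V := by
          rw [ENNReal.tsum_mul_right, ENNReal.tsum_mul_left, ENNReal.tsum_geometric, zero_add]
      _ < ⊤ := by
          apply ENNReal.mul_lt_top (ENNReal.mul_lt_top ENNReal.ofReal_lt_top _) hVlt
          rw [ENNReal.inv_lt_top]
          rw [pos_iff_ne_zero]
          intro h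
          rw [tsub_eq_zero_iff_le] at h
          exact absurd (lt_of_lt_of_le (ENNReal.ofReal_lt_one.mpr hq1) h) (lt_irrefl _)
  exact ENNReal.add_lt_top.mpr ⟨hball, htail⟩

lemma weight_bound (d : ℕ) (hd : 1 ≤ d) {s ε : ℝ} (hs0 : 0 < s) (hs1 : s < 1)
    (hε0 : 0 < ε) :
    ∫⁻ v : EuclideanSpace ℝ (Fin d),
        ENNReal.ofReal (‖v‖ ^ (4:ℝ) * ((1 + ε ^ 2 * ‖v‖ ^ 2) ^ 2)⁻¹
          * (1 + ‖v‖ ^ 2) ^ (-((d:ℝ) + 2 * s) / 2))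
      ≤ ENNReal.ofReal (ε ^ (2 * s - 4)) *
        ∫⁻ w : EuclideanSpace ℝ (Fin d),
          ENNReal.ofReal (‖w‖ ^ (4 - (d:ℝ) - 2 * s) * ((1 + ‖w‖ ^ 2) ^ 2)⁻¹) := by
  set E := EuclideanSpace ℝ (Fin d)
  have hdfin : Module.finrank ℝ E = d := finrank_euclideanSpace_fin
  set e : ℝ := -((d:ℝ) + 2 * s) / 2 with he
  set F : E → ℝ≥0∞ := fun v =>
    ENNReal.ofReal (‖v‖ ^ (4:ℝ) * ((1 + ε ^ 2 * ‖v‖ ^ 2) ^ 2)⁻¹ * (1 + ‖v‖ ^ 2) ^ e) with hF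
  set G : E → ℝ≥0∞ := fun w =>
    ENNReal.ofReal (‖w‖ ^ (4 - (d:ℝ) - 2 * s) * ((1 + ‖w‖ ^ 2) ^ 2)⁻¹) with hG
  have hFm : Measurable F := by
    apply Measurable.ennreal_ofReal; fun_prop
  have hmap : Measure.map (fun w : E => ε⁻¹ • w) volume
      = ENNReal.ofReal (ε ^ d) • (volume : Measure E) := by
    rw [Measure.map_addHaar_smul volume (inv_ne_zero hε0.ne')]
    congr 1
    rw [hdfin, ← inv_pow, inv_inv, abs_of_nonneg (by positivity)]
  have key : ENNReal.ofReal (ε ^ d) * ∫⁻ v, F v = ∫⁻ w, F (ε⁻¹ • w) := by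
    rw [← smul_eq_mul, ← lintegral_smul_measure, ← hmap,
      lintegral_map hFm (measurable_const_smul ε⁻¹)]
  have hpt : ∀ w : E, F (ε⁻¹ • w)
      ≤ ENNReal.ofReal (ε ^ ((d:ℝ) + 2 * s - 4)) * G w := by
    intro w
    rcases eq_or_ne w 0 with rfl | hw
    · have : F (ε⁻¹ • (0:E)) = 0 := by
        simp only [hF, smul_zero, norm_zero]
        rw [Real.zero_rpow (by norm_num)]
        simp
      rw [this]; exact zero_le
    · have ht0 : 0 < ‖w‖ := norm_pos_iff.mpr hw
      have hεt : 0 < ε⁻¹ * ‖w‖ := by positivity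
      have hnrm : ‖ε⁻¹ • w‖ = ε⁻¹ * ‖w‖ := by
        rw [norm_smul, Real.norm_eq_abs, abs_of_pos (by positivity)]
      rw [hF, hG, ← ENNReal.ofReal_mul (by positivity)]
      apply ENNReal.ofReal_le_ofReal
      rw [hnrm]
      have hsq : ε ^ 2 * (ε⁻¹ * ‖w‖) ^ 2 = ‖w‖ ^ 2 := by
        field_simp
      rw [hsq]
      have he0 : e ≤ 0 := by
        rw [he]
        have h0d : (0:ℝ) ≤ (d:ℝ) := Nat.cast_nonneg d
        linarith
      have h3 : (1 + (ε⁻¹ * ‖w‖) ^ 2) ^ e ≤ ((ε⁻¹ * ‖w‖) ^ 2) ^ e :=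
        Real.rpow_le_rpow_of_nonpos (by positivity) (by nlinarith) he0
      have h4 : ((ε⁻¹ * ‖w‖) ^ 2 : ℝ) ^ e = (ε⁻¹ * ‖w‖) ^ (2 * e) := by
        rw [← Real.rpow_natCast (ε⁻¹ * ‖w‖) 2, ← Real.rpow_mul hεt.le]
        norm_num
      have h5 : (ε⁻¹ * ‖w‖) ^ (4:ℝ) * (ε⁻¹ * ‖w‖) ^ (2 * e)
          = (ε⁻¹ * ‖w‖) ^ (4 - (d:ℝ) - 2 * s) := by
        rw [← Real.rpow_add hεt]
        congr 1
        rw [he]; ring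
      have h6 : (ε⁻¹ * ‖w‖) ^ (4 - (d:ℝ) - 2 * s)
          = ε ^ ((d:ℝ) + 2 * s - 4) * ‖w‖ ^ (4 - (d:ℝ) - 2 * s) := by
        rw [Real.mul_rpow (by positivity) ht0.le, ← Real.rpow_neg_one ε,
          ← Real.rpow_mul hε0.le]
        congr 2
        ring
      calc (ε⁻¹ * ‖w‖) ^ (4:ℝ) * ((1 + ‖w‖ ^ 2) ^ 2)⁻¹ * (1 + (ε⁻¹ * ‖w‖) ^ 2) ^ e
          ≤ (ε⁻¹ * ‖w‖) ^ (4:ℝ) * ((1 + ‖w‖ ^ 2) ^ 2)⁻¹ * ((ε⁻¹ * ‖w‖) ^ 2) ^ e := by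
            apply mul_le_mul_of_nonneg_left h3 (by positivity)
        _ = ε ^ ((d:ℝ) + 2 * s - 4) * (‖w‖ ^ (4 - (d:ℝ) - 2 * s) * ((1 + ‖w‖ ^ 2) ^ 2)⁻¹) := by
            rw [h4, mul_right_comm, h5, h6]
            ring
  have hε0' : ENNReal.ofReal (ε ^ d) ≠ 0 := by
    simp only [ne_eq, ENNReal.ofReal_eq_zero, not_le]
    positivity
  rw [← ENNReal.mul_le_mul_iff_right hε0' ENNReal.ofReal_ne_top, key]
  calc ∫⁻ w, F (ε⁻¹ • w)
      ≤ ∫⁻ w, ENNReal.ofReal (ε ^ ((d:ℝ) + 2 * s - 4)) * G w := lintegral_mono hpt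
    _ = ENNReal.ofReal (ε ^ ((d:ℝ) + 2 * s - 4)) * ∫⁻ w, G w :=
        lintegral_const_mul' _ _ ENNReal.ofReal_ne_top
    _ = ENNReal.ofReal (ε ^ d) * (ENNReal.ofReal (ε ^ (2 * s - 4)) * ∫⁻ w, G w) := by
        rw [← mul_assoc, ← ENNReal.ofReal_mul (by positivity)]
        congr 2
        rw [← Real.rpow_natCast ε d, ← Real.rpow_add hε0]
        congr 1
        ring

/-- Bound on the twisted second moments:
`∫_Ω (∫ vᵢ vⱼ f(x,v) ⟨εv⟩⁻² dv)² dx ≤ C ε^{2s−4} ∫_Ω ∫ f² M₁⁻¹ dv dx`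
uniformly for `ε ∈ (0,1]`. -/
theorem twisted_second_moment_L2_bound
    (d : ℕ) (hd : 1 ≤ d) (s : ℝ) (hs0 : 0 < s) (hs1 : s < 1)
    (c : ℝ) (hc : 0 < c) (hM : ∫ v, M1 d s c v = 1)
    (i j : Fin d)
    (Ω : Set (EuclideanSpace ℝ (Fin d))) (hΩ : MeasurableSet Ω) :
    ∃ C > 0, ∀ ε ∈ Set.Ioc (0 : ℝ) 1,
      ∀ f : EuclideanSpace ℝ (Fin d) → EuclideanSpace ℝ (Fin d) → ℝ,
      Measurable (Function.uncurry f) →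
      Integrable
        (fun p : EuclideanSpace ℝ (Fin d) × EuclideanSpace ℝ (Fin d) =>
          f p.1 p.2 ^ 2 * (M1 d s c p.2)⁻¹) ((volume.restrict Ω).prod volume) →
      ∫ x in Ω,
          (∫ v : EuclideanSpace ℝ (Fin d),
            v i * v j * f x v * (1 + ε ^ 2 * ‖v‖ ^ 2)⁻¹) ^ 2 ≤
        C * ε ^ (2 * s - 4) * ∫ x in Ω, ∫ v, f x v ^ 2 * (M1 d s c v)⁻¹ := by
  have ha1 : -(d:ℝ) < 4 - (d:ℝ) - 2 * s := by linarith
  have ha2 : 4 - (d:ℝ) - 2 * s < 4 - (d:ℝ) := by linarith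
  set L : ℝ≥0∞ := ∫⁻ w : EuclideanSpace ℝ (Fin d),
      ENNReal.ofReal (‖w‖ ^ (4 - (d:ℝ) - 2 * s) * ((1 + ‖w‖ ^ 2) ^ 2)⁻¹) with hL
  have hLlt : L < ⊤ := aux_lt_top d hd ha1 ha2
  have hLR : (0:ℝ) ≤ L.toReal := ENNReal.toReal_nonneg
  refine ⟨c * L.toReal + 1, by nlinarith, ?_⟩
  rintro ε ⟨hε0, hε1⟩ f hfm hfi
  set M := M1 d s c with hMdef
  have hMpos : ∀ v, 0 < M v := fun v =>
    mul_pos hc (Real.rpow_pos_of_pos (by positivity) _)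
  have hMm : Measurable M := by
    rw [hMdef]
    have : (M1 d s c) = fun v : EuclideanSpace ℝ (Fin d) =>
        c * (1 + ‖v‖ ^ 2) ^ (-((d : ℝ) + 2 * s) / 2) := rfl
    rw [this]
    fun_prop
  have hfxm : ∀ x, Measurable (f x) := fun x => hfm.comp measurable_prodMk_left
  set Φ : EuclideanSpace ℝ (Fin d) → ℝ :=
    fun v => (v i * v j) ^ 2 * ((1 + ε ^ 2 * ‖v‖ ^ 2) ^ 2)⁻¹ * M v with hΦ
  have hΦnonneg : ∀ v, 0 ≤ Φ v := fun v => by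
    have h := (hMpos v).le
    have h2 : (0:ℝ) ≤ ((1 + ε ^ 2 * ‖v‖ ^ 2) ^ 2)⁻¹ := by positivity
    positivity
  have hΦm : Measurable Φ := by
    apply Measurable.mul _ hMm
    apply Measurable.mul
    · exact (((EuclideanSpace.proj i).continuous.measurable).mul ((EuclideanSpace.proj j).continuous.measurable)).pow_const 2
    · fun_prop
  set D : ℝ≥0∞ := ENNReal.ofReal c * (ENNReal.ofReal (ε ^ (2 * s - 4)) * L) with hD
  have hDlt : D < ⊤ :=
    ENNReal.mul_lt_top ENNReal.ofReal_lt_top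
      (ENNReal.mul_lt_top ENNReal.ofReal_lt_top hLlt)
  have hT : ∫⁻ v, ENNReal.ofReal (Φ v) ≤ D := by
    have hpt : ∀ v : EuclideanSpace ℝ (Fin d), ENNReal.ofReal (Φ v)
        ≤ ENNReal.ofReal (c * (‖v‖ ^ (4:ℝ) * ((1 + ε ^ 2 * ‖v‖ ^ 2) ^ 2)⁻¹
            * (1 + ‖v‖ ^ 2) ^ (-((d:ℝ) + 2 * s) / 2))) := by
      intro v
      apply ENNReal.ofReal_le_ofReal
      have hvij : (v i * v j) ^ 2 ≤ ‖v‖ ^ (4:ℝ) := by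
        have h1 := coord_sq_le_norm_sq v i
        have h2 := coord_sq_le_norm_sq v j
        have h4 : ‖v‖ ^ (4:ℝ) = ‖v‖ ^ (4:ℕ) := by
          rw [show (4:ℝ) = ((4:ℕ):ℝ) by norm_num, Real.rpow_natCast]
        rw [h4]
        nlinarith [mul_le_mul h1 h2 (sq_nonneg (v j)) (sq_nonneg ‖v‖)]
      have hR : (0:ℝ) ≤ (1 + ‖v‖ ^ 2) ^ (-((d:ℝ) + 2 * s) / 2) :=
        (Real.rpow_pos_of_pos (by positivity) _).le
      calc Φ v = c * ((v i * v j) ^ 2 * ((1 + ε ^ 2 * ‖v‖ ^ 2) ^ 2)⁻¹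
            * (1 + ‖v‖ ^ 2) ^ (-((d:ℝ) + 2 * s) / 2)) := by
            simp only [hΦ, hMdef, M1]; ring
        _ ≤ c * (‖v‖ ^ (4:ℝ) * ((1 + ε ^ 2 * ‖v‖ ^ 2) ^ 2)⁻¹
            * (1 + ‖v‖ ^ 2) ^ (-((d:ℝ) + 2 * s) / 2)) := by
            apply mul_le_mul_of_nonneg_left _ hc.le
            apply mul_le_mul_of_nonneg_right _ hR
            exact mul_le_mul_of_nonneg_right hvij (by positivity)
    calc ∫⁻ v, ENNReal.ofReal (Φ v)
        ≤ ∫⁻ v, ENNReal.ofReal (c * (‖v‖ ^ (4:ℝ) * ((1 + ε ^ 2 * ‖v‖ ^ 2) ^ 2)⁻¹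
            * (1 + ‖v‖ ^ 2) ^ (-((d:ℝ) + 2 * s) / 2))) := lintegral_mono hpt
      _ = ENNReal.ofReal c * ∫⁻ v, ENNReal.ofReal (‖v‖ ^ (4:ℝ)
            * ((1 + ε ^ 2 * ‖v‖ ^ 2) ^ 2)⁻¹
            * (1 + ‖v‖ ^ 2) ^ (-((d:ℝ) + 2 * s) / 2)) := by
          rw [← lintegral_const_mul' _ _ ENNReal.ofReal_ne_top]
          congr 1 with v
          rw [← ENNReal.ofReal_mul hc.le]
      _ ≤ D := by
          rw [hD]
          exact mul_le_mul_right (weight_bound d hd hs0 hs1 hε0) _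
  set I2 : EuclideanSpace ℝ (Fin d) → ℝ≥0∞ :=
    fun x => ∫⁻ v, ENNReal.ofReal (f x v ^ 2 * (M v)⁻¹) with hI2
  have hFm2 : Measurable fun p : EuclideanSpace ℝ (Fin d) × EuclideanSpace ℝ (Fin d) =>
      ENNReal.ofReal (f p.1 p.2 ^ 2 * (M p.2)⁻¹) := by
    apply Measurable.ennreal_ofReal
    exact (hfm.pow_const 2).mul ((hMm.comp measurable_snd).inv)
  have hCS : ∀ x, I2 x ≠ ⊤ →
      (∫ v, v i * v j * f x v * (1 + ε ^ 2 * ‖v‖ ^ 2)⁻¹) ^ 2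
        ≤ D.toReal * (I2 x).toReal := by
    intro x hxfin
    set ψ : EuclideanSpace ℝ (Fin d) → ℝ :=
      fun v => v i * v j * f x v * (1 + ε ^ 2 * ‖v‖ ^ 2)⁻¹ with hψ
    set A : EuclideanSpace ℝ (Fin d) → ℝ≥0∞ :=
      fun v => ENNReal.ofReal (Real.sqrt (Φ v)) with hA
    set B : EuclideanSpace ℝ (Fin d) → ℝ≥0∞ :=
      fun v => ENNReal.ofReal (Real.sqrt (f x v ^ 2 * (M v)⁻¹)) with hB
    have hAm : Measurable A :=
      (Real.continuous_sqrt.measurable.comp hΦm).ennreal_ofReal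
    have hBm : Measurable B :=
      (Real.continuous_sqrt.measurable.comp
        (((hfxm x).pow_const 2).mul hMm.inv)).ennreal_ofReal
    have hab : ∀ v, A v * B v = ENNReal.ofReal |ψ v| := by
      intro v
      rw [hA, hB]
      simp only
      rw [← ENNReal.ofReal_mul (Real.sqrt_nonneg _), ← Real.sqrt_mul (hΦnonneg v)]
      congr 1
      have hMne : M v ≠ 0 := (hMpos v).ne'
      have hsq : Φ v * (f x v ^ 2 * (M v)⁻¹) = ψ v ^ 2 := by
        simp only [hΦ, hψ]
        field_simp
      rw [hsq, Real.sqrt_sq_eq_abs]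
    have hconj : (2:ℝ).HolderConjugate 2 := by
      rw [Real.holderConjugate_iff]; norm_num
    have hH := ENNReal.lintegral_mul_le_Lp_mul_Lq volume hconj
      hAm.aemeasurable hBm.aemeasurable
    have hA2 : ∫⁻ v, A v ^ (2:ℝ) = ∫⁻ v, ENNReal.ofReal (Φ v) := by
      congr 1 with v
      rw [hA]
      simp only
      rw [ENNReal.ofReal_rpow_of_nonneg (Real.sqrt_nonneg _) (by norm_num)]
      congr 1
      rw [show ((Real.sqrt (Φ v)) ^ (2:ℝ)) = (Real.sqrt (Φ v))^(2:ℕ) by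
        rw [← Real.rpow_natCast]; norm_num]
      exact Real.sq_sqrt (hΦnonneg v)
    have hB2 : ∫⁻ v, B v ^ (2:ℝ) = I2 x := by
      rw [hI2]
      congr 1 with v
      rw [hB]
      simp only
      rw [ENNReal.ofReal_rpow_of_nonneg (Real.sqrt_nonneg _) (by norm_num)]
      congr 1
      rw [show ((Real.sqrt (f x v ^ 2 * (M v)⁻¹)) ^ (2:ℝ))
          = (Real.sqrt (f x v ^ 2 * (M v)⁻¹))^(2:ℕ) by
        rw [← Real.rpow_natCast]; norm_num]
      exact Real.sq_sqrt (mul_nonneg (sq_nonneg _) (inv_nonneg.mpr (hMpos v).le))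
    have hmain : (∫⁻ v, ENNReal.ofReal |ψ v|) ^ (2:ℕ) ≤ D * I2 x := by
      calc (∫⁻ v, ENNReal.ofReal |ψ v|) ^ (2:ℕ)
          = (∫⁻ v, (A * B) v) ^ (2:ℕ) := by
            congr 1
            apply lintegral_congr
            intro v
            rw [Pi.mul_apply, hab v]
        _ ≤ ((∫⁻ v, A v ^ (2:ℝ)) ^ (1/(2:ℝ))
            * (∫⁻ v, B v ^ (2:ℝ)) ^ (1/(2:ℝ))) ^ (2:ℕ) := pow_le_pow_left' hH 2
        _ = (∫⁻ v, A v ^ (2:ℝ)) * (∫⁻ v, B v ^ (2:ℝ)) := by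
            rw [mul_pow]
            congr 1 <;>
            · rw [← ENNReal.rpow_natCast _ 2, ← ENNReal.rpow_mul]
              norm_num
        _ ≤ D * I2 x := by
            rw [hA2, hB2]
            exact mul_le_mul' hT le_rfl
    have hbd : |∫ v, ψ v| ≤ (∫⁻ v, ENNReal.ofReal |ψ v|).toReal := by
      simpa [Real.norm_eq_abs] using norm_integral_le_lintegral_norm ψ (μ := volume)
    calc (∫ v, ψ v) ^ 2 = |∫ v, ψ v| ^ 2 := (sq_abs _).symm
      _ ≤ ((∫⁻ v, ENNReal.ofReal |ψ v|).toReal) ^ 2 :=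
          pow_le_pow_left₀ (abs_nonneg _) hbd 2
      _ = ((∫⁻ v, ENNReal.ofReal |ψ v|) ^ (2:ℕ)).toReal :=
          (ENNReal.toReal_pow _ 2).symm
      _ ≤ (D * I2 x).toReal :=
          ENNReal.toReal_mono (ENNReal.mul_ne_top hDlt.ne hxfin) hmain
      _ = D.toReal * (I2 x).toReal := ENNReal.toReal_mul
  have hI2m : Measurable I2 :=
    Measurable.lintegral_prod_right
      (f := fun x v => ENNReal.ofReal (f x v ^ 2 * (M v)⁻¹)) hFm2
  have hρfin : ∫⁻ x in Ω, I2 x ∂volume < ⊤ := by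
    have h1 := hfi.2
    rw [hasFiniteIntegral_iff_norm] at h1
    have h2 : ∫⁻ x in Ω, I2 x ∂volume
        = ∫⁻ p : EuclideanSpace ℝ (Fin d) × EuclideanSpace ℝ (Fin d),
          ENNReal.ofReal (f p.1 p.2 ^ 2 * (M p.2)⁻¹)
            ∂((volume.restrict Ω).prod volume) :=
      (lintegral_prod _ hFm2.aemeasurable).symm
    rw [h2]
    calc ∫⁻ p : EuclideanSpace ℝ (Fin d) × EuclideanSpace ℝ (Fin d),
          ENNReal.ofReal (f p.1 p.2 ^ 2 * (M p.2)⁻¹) ∂((volume.restrict Ω).prod volume)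
        = ∫⁻ p : EuclideanSpace ℝ (Fin d) × EuclideanSpace ℝ (Fin d),
          ENNReal.ofReal ‖f p.1 p.2 ^ 2 * (M p.2)⁻¹‖ ∂((volume.restrict Ω).prod volume) := by
          apply lintegral_congr
          intro p
          rw [Real.norm_eq_abs, abs_of_nonneg
            (mul_nonneg (sq_nonneg _) (inv_nonneg.mpr (hMpos _).le))]
      _ < ⊤ := h1
  have haefin : ∀ᵐ x ∂(volume.restrict Ω), I2 x ≠ ⊤ :=
    (ae_lt_top hI2m hρfin.ne).mono fun x h => h.ne
  have hh_int : Integrable (fun x => (I2 x).toReal) (volume.restrict Ω) := by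
    refine ⟨(hI2m.ennreal_toReal).aestronglyMeasurable, ?_⟩
    rw [hasFiniteIntegral_iff_ofReal (Filter.Eventually.of_forall
      fun x => ENNReal.toReal_nonneg)]
    exact lt_of_le_of_lt (lintegral_mono fun x => ENNReal.ofReal_toReal_le) hρfin
  have hgh : ∀ x, (∫ v, f x v ^ 2 * (M v)⁻¹) = (I2 x).toReal := by
    intro x
    rw [integral_eq_lintegral_of_nonneg_ae
      (Filter.Eventually.of_forall fun v =>
        mul_nonneg (sq_nonneg _) (inv_nonneg.mpr (hMpos v).le))
      (((hfxm x).pow_const 2).mul hMm.inv).aestronglyMeasurable]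
  calc ∫ x in Ω, (∫ v, v i * v j * f x v * (1 + ε ^ 2 * ‖v‖ ^ 2)⁻¹) ^ 2
      ≤ ∫ x in Ω, D.toReal * (I2 x).toReal := by
        apply integral_mono_of_nonneg
        · exact Filter.Eventually.of_forall fun x => sq_nonneg _
        · exact hh_int.const_mul _
        · filter_upwards [haefin] with x hx
          exact hCS x hx
    _ = D.toReal * ∫ x in Ω, (I2 x).toReal := integral_const_mul _ _
    _ ≤ (c * L.toReal + 1) * ε ^ (2 * s - 4) * ∫ x in Ω, ∫ v, f x v ^ 2 * (M v)⁻¹ := by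
        have h1 : (∫ x in Ω, ∫ v, f x v ^ 2 * (M v)⁻¹)
            = ∫ x in Ω, (I2 x).toReal := by
          apply integral_congr_ae
          exact Filter.Eventually.of_forall fun x => hgh x
        rw [h1]
        have hεr : (0:ℝ) ≤ ε ^ (2 * s - 4) := Real.rpow_nonneg hε0.le _
        have h2 : D.toReal ≤ (c * L.toReal + 1) * ε ^ (2 * s - 4) := by
          rw [hD, ENNReal.toReal_mul, ENNReal.toReal_mul,
            ENNReal.toReal_ofReal hc.le, ENNReal.toReal_ofReal hεr]
          nlinarith
        exact mul_le_mul_of_nonneg_right h2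
          (integral_nonneg fun x => ENNReal.toReal_nonneg)
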